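/- arXiv:2111.08245 — 2 statements merged into one kernel-verified Lean document; each statement's English description precedes it below -/
import Mathlib

section
/- Let A be a real symmetric n × n matrix. Then there exists a unitary matrix h ∈ U(n) (viewed as a complex n × n matrix with real part Re h and imaginary part Im h) such that Re h is invertible and A = (Im h)(Re h)^{-1}. In fact h = (I + iA)(I + A^2)^{-1/2} works, where (I + A^2)^{-1/2} is the inverse of the positive definite square root of I + A^2. -/
/-!
Let `S` be the positive square root of `1 + A²`. Then `h = (1 + iA)S⁻¹` has real part `S⁻¹` and
imaginary part `AS⁻¹`, so `(Im h)(Re h)⁻¹ = A`. For `h = P + iQ` one has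
`h*h = (PᵀP + QᵀQ) + i(PᵀQ - QᵀP)`; as `A` and `S` are symmetric, this is
`S⁻¹(1 + A²)S⁻¹ + i(S⁻¹AS⁻¹ - S⁻¹AS⁻¹) = 1`.
-/

open Matrix

namespace Matrix

variable {l m n : Type*}

def ofReIm (P Q : Matrix m n ℝ) : Matrix m n ℂ :=
  P.map (↑) + Complex.I • Q.map (↑)

@[simp]
lemma ofReIm_map_re (P Q : Matrix m n ℝ) : (ofReIm P Q).map Complex.re = P := by
  ext; simp [ofReIm]

@[simp]
lemma ofReIm_map_im (P Q : Matrix m n ℝ) : (ofReIm P Q).map Complex.im = Q := by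
  ext; simp [ofReIm]

lemma conjTranspose_ofReIm (P Q : Matrix m n ℝ) : (ofReIm P Q)ᴴ = ofReIm Pᵀ (-Qᵀ) := by
  ext; simp [ofReIm, conjTranspose_apply]

lemma ofReIm_mul [Fintype m] (P Q : Matrix l m ℝ) (P' Q' : Matrix m n ℝ) :
    ofReIm P Q * ofReIm P' Q' = ofReIm (P * P' - Q * Q') (P * Q' + Q * P') := by
  ext i j
  apply Complex.ext <;>
    simp [ofReIm, mul_apply, Complex.re_sum, Complex.im_sum, Finset.sum_add_distrib,
      Finset.sum_sub_distrib]

lemma ofReIm_one_zero [DecidableEq n] : ofReIm (1 : Matrix n n ℝ) 0 = 1 := by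
  ext i j; by_cases h : i = j <;> simp [ofReIm, one_apply, h]

lemma ofReIm_mem_unitaryGroup [Fintype n] [DecidableEq n] {P Q : Matrix n n ℝ}
    (hnorm : Pᵀ * P + Qᵀ * Q = 1) (hcomm : Pᵀ * Q = Qᵀ * P) :
    ofReIm P Q ∈ unitaryGroup n ℂ := by
  rw [mem_unitaryGroup_iff', star_eq_conjTranspose, conjTranspose_ofReIm, ofReIm_mul,
    neg_mul, neg_mul, sub_neg_eq_add, hnorm, hcomm, add_neg_cancel, ofReIm_one_zero]

lemma IsSymm.posDef_one_add_mul_self [Fintype n] [DecidableEq n] {A : Matrix n n ℝ}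
    (hA : A.IsSymm) : (1 + A * A).PosDef := by
  have hAA : (Aᴴ * A).PosSemidef := posSemidef_conjTranspose_mul_self A
  rw [conjTranspose_eq_transpose_of_trivial, hA.eq] at hAA
  exact PosDef.one.add_posSemidef hAA

open scoped ComplexOrder MatrixOrder in
lemma PosDef.exists_isHermitian_isUnit_mul_self_eq {𝕜 : Type*} [RCLike 𝕜] [Fintype n]
    [DecidableEq n] {M : Matrix n n 𝕜} (hM : M.PosDef) :
    ∃ S : Matrix n n 𝕜, S.IsHermitian ∧ IsUnit S ∧ S * S = M := by
  have hSS : CFC.sqrt M * CFC.sqrt M = M := CFC.sqrt_mul_sqrt_self M hM.posSemidef.nonneg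
  refine ⟨CFC.sqrt M, (CFC.sqrt_nonneg M).posSemidef.isHermitian, ?_, hSS⟩
  exact isUnit_of_mul_isUnit_left (hSS ▸ hM.isUnit)

lemma ofReIm_inv_mem_unitaryGroup [Fintype n] [DecidableEq n] {A S : Matrix n n ℝ}
    (hA : A.IsSymm) (hS : S.IsSymm) (hSu : IsUnit S) (hSS : S * S = 1 + A * A) :
    ofReIm S⁻¹ (A * S⁻¹) ∈ unitaryGroup n ℂ := by
  have hdet : IsUnit S.det := (isUnit_iff_isUnit_det S).mp hSu
  have hT : (A * S⁻¹)ᵀ = S⁻¹ * A := by rw [transpose_mul, hS.inv.eq, hA.eq]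
  refine ofReIm_mem_unitaryGroup ?_ ?_ <;> rw [hT, hS.inv.eq]
  · calc S⁻¹ * S⁻¹ + S⁻¹ * A * (A * S⁻¹) = S⁻¹ * (S * S) * S⁻¹ := by
          rw [hSS]; noncomm_ring
      _ = 1 := by
          rw [← mul_assoc, mul_nonsing_inv_cancel_right S _ hdet, nonsing_inv_mul S hdet]
  · exact (mul_assoc _ _ _).symm

end Matrix

theorem stmt1 (n : ℕ) (A : Matrix (Fin n) (Fin n) ℝ) (hA : A.IsSymm) :
    ∃ h : Matrix (Fin n) (Fin n) ℂ,
      h ∈ Matrix.unitaryGroup (Fin n) ℂ ∧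
      IsUnit (h.map Complex.re) ∧
      A = (h.map Complex.im) * (h.map Complex.re)⁻¹ := by
  obtain ⟨S, hS, hSu, hSS⟩ := hA.posDef_one_add_mul_self.exists_isHermitian_isUnit_mul_self_eq
  have hdet : IsUnit S.det := (isUnit_iff_isUnit_det S).mp hSu
  refine ⟨ofReIm S⁻¹ (A * S⁻¹),
    ofReIm_inv_mem_unitaryGroup hA (isHermitian_iff_isSymm.mp hS) hSu hSS, ?_, ?_⟩
  · rw [ofReIm_map_re]
    exact isUnit_nonsing_inv_iff.mpr hSu
  · simp [nonsing_inv_nonsing_inv S hdet, nonsing_inv_mul_cancel_right S A hdet]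
end

section
/- Let g ∈ GL(4,R) be the matrix with rows (1,0,0,0), (0,1,0,0), (√3, √5, 1, √2), (0,0,0,1), let Λ(g) ⊂ R^4 be the lattice generated by its rows, and let a_t = diag(e^{-t}, e^{t}, e^{-t}, e^{t}). Then: (1) for every t, the lattice Λ(g)·a_t (images of lattice vectors under right multiplication by a_t) contains the nonzero vector (e^{-t}, 0, 0, 0) of norm e^{-t}, so the minimal norm of a nonzero vector of Λ(g)·a_t tends to 0 as t → ∞; and (2) the vector (0,0,1,0) lies in the real span of Λ(g) and is not contained in the real span of any sublattice of Λ(g) of rank at most 3. -/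
/-!
Part (1) is witnessed by the lattice vector `(1,0,0,0)`, which `a_t` contracts by `e^{-t}`.

For part (2), the linear change of coordinates `shearG` sends `Λ(g)` into `ℤ⁴` and `(0,0,1,0)` to
`(√3, √5, 1, √2)`. Fewer than four rational vectors are annihilated by a nonzero rational
functional, which cannot vanish at a vector with `ℚ`-linearly independent coordinates. The
`ℚ`-independence of `1, √2, √3, √5` comes from squaring `a + b√2 = -(c√3 + d√5)`: this leaves
relations `x√m + y√n ∈ ℚ`, and squaring once more reduces those to the irrationality of `√k` for
the non-squares `k`.
-/

/-- The geodesic flow `a_t = diag(e^{-t}, e^{t}, e^{-t}, e^{t})` on `ℝ⁴` with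
coordinates `(x₁, y₁, x₂, y₂)`. -/
noncomputable def geodFlow4 (t : ℝ) (w : EuclideanSpace ℝ (Fin 4)) :
    EuclideanSpace ℝ (Fin 4) :=
  WithLp.toLp 2 (fun i => (if i.val % 2 = 0 then Real.exp (-t) else Real.exp t) * w i)

/-- The lattice `Λ(g)` generated by the rows `(1,0,0,0), (0,1,0,0),
`(√3, √5, 1, √2), (0,0,0,1)`. -/
noncomputable def LatticeG : Submodule ℤ (EuclideanSpace ℝ (Fin 4)) :=
  Submodule.span ℤ ({WithLp.toLp 2 ![1, 0, 0, 0], WithLp.toLp 2 ![0, 1, 0, 0],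
    WithLp.toLp 2 ![Real.sqrt 3, Real.sqrt 5, 1, Real.sqrt 2], WithLp.toLp 2 ![0, 0, 0, 1]} :
    Set (EuclideanSpace ℝ (Fin 4)))

open Real

lemma eq_zero_of_mul_sqrt_eq_ratCast {n : ℕ} (hn : ¬IsSquare n) {x r : ℚ}
    (h : x * √(n : ℝ) = r) : x = 0 := by
  by_contra hx
  exact (irrational_sqrt_natCast_iff.mpr hn).ratCast_mul hx ⟨r, h.symm⟩

lemma eq_zero_of_mul_sqrt_add_mul_sqrt_eq_ratCast {m n : ℕ} (hm : ¬IsSquare m)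
    (hn : ¬IsSquare n) (hmn : ¬IsSquare (m * n)) {x y r : ℚ}
    (h : x * √(m : ℝ) + y * √(n : ℝ) = r) : x = 0 ∧ y = 0 := by
  have hsq : (2 * x * y : ℚ) * √((m * n : ℕ) : ℝ) = (r ^ 2 - x ^ 2 * m - y ^ 2 * n : ℚ) := by
    push_cast
    rw [Real.sqrt_mul (Nat.cast_nonneg m)]
    linear_combination (x * √(m : ℝ) + y * √(n : ℝ) + r) * h
      - (x : ℝ) ^ 2 * Real.sq_sqrt (Nat.cast_nonneg m)
      - (y : ℝ) ^ 2 * Real.sq_sqrt (Nat.cast_nonneg n)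
  have hxy : x * y = 0 := by
    have := eq_zero_of_mul_sqrt_eq_ratCast hmn hsq
    linear_combination this / 2
  rcases mul_eq_zero.mp hxy with rfl | rfl
  · exact ⟨rfl, eq_zero_of_mul_sqrt_eq_ratCast hn (r := r) (by simpa using h)⟩
  · exact ⟨eq_zero_of_mul_sqrt_eq_ratCast hm (r := r) (by simpa using h), rfl⟩

theorem eq_zero_of_add_mul_sqrt_two_add_mul_sqrt_three_add_mul_sqrt_five {a b c d : ℚ}
    (h : a + b * √2 + c * √3 + d * √5 = 0) : a = 0 ∧ b = 0 ∧ c = 0 ∧ d = 0 := by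
  have h2 : √(2 : ℝ) ^ 2 = 2 := Real.sq_sqrt (by norm_num)
  have h3 : √(3 : ℝ) ^ 2 = 3 := Real.sq_sqrt (by norm_num)
  have h5 : √(5 : ℝ) ^ 2 = 5 := Real.sq_sqrt (by norm_num)
  have h15 : √(15 : ℝ) = √3 * √5 := by
    rw [← Real.sqrt_mul (by norm_num)]; norm_num
  -- squaring `a + b√2 = -(c√3 + d√5)`
  obtain ⟨hab, hcd⟩ : 2 * a * b = 0 ∧ -2 * c * d = 0 :=
    eq_zero_of_mul_sqrt_add_mul_sqrt_eq_ratCast (m := 2) (n := 15) (by decide +kernel)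
      (by decide +kernel) (by decide +kernel) (r := 3 * c ^ 2 + 5 * d ^ 2 - a ^ 2 - 2 * b ^ 2) (by
        push_cast
        rw [h15]
        linear_combination (a + b * √2 - c * √3 - d * √5) * h
          - (b : ℝ) ^ 2 * h2 + (c : ℝ) ^ 2 * h3 + (d : ℝ) ^ 2 * h5)
  have hbcd : b = 0 ∧ c = 0 ∧ d = 0 := by
    rcases mul_eq_zero.mp hab with ha | rfl
    · obtain rfl : a = 0 := by simpa using ha
      rcases mul_eq_zero.mp hcd with hc | rfl
      · obtain rfl : c = 0 := by simpa using hc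
        obtain ⟨rfl, rfl⟩ := eq_zero_of_mul_sqrt_add_mul_sqrt_eq_ratCast (m := 2) (n := 5)
          (by decide +kernel) (by decide +kernel) (by decide +kernel) (x := b) (y := d) (r := 0)
          (by push_cast; linear_combination h)
        simp
      · obtain ⟨rfl, rfl⟩ := eq_zero_of_mul_sqrt_add_mul_sqrt_eq_ratCast (m := 2) (n := 3)
          (by decide +kernel) (by decide +kernel) (by decide +kernel) (x := b) (y := c) (r := 0)
          (by push_cast; linear_combination h)
        simp
    · obtain ⟨rfl, rfl⟩ := eq_zero_of_mul_sqrt_add_mul_sqrt_eq_ratCast (m := 3) (n := 5)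
        (by decide +kernel) (by decide +kernel) (by decide +kernel) (x := c) (y := d) (r := -a)
        (by push_cast; linear_combination h)
      simp
  obtain ⟨rfl, rfl, rfl⟩ := hbcd
  exact ⟨by simpa using h, rfl, rfl, rfl⟩

theorem LinearIndependent.notMem_span_range_of_card_lt {K L ι κ : Type*} [Field K] [CommRing L]
    [Algebra K L] [Fintype ι] [Fintype κ] {u : κ → L} (hu : LinearIndependent K u)
    {W : ι → κ → L} (hW : ∀ i j, W i j ∈ (algebraMap K L).range)
    (hcard : Fintype.card ι < Fintype.card κ) : u ∉ Submodule.span L (Set.range W) := by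
  intro hmem
  obtain ⟨c, rfl⟩ := (Submodule.mem_span_range_iff_exists_fun L).mp hmem
  choose V hV using hW
  -- the `card κ` columns of `V` live in `Kᶥ`, so some nontrivial combination of them vanishes
  obtain ⟨g, hg, j, hj⟩ : ∃ g : κ → K, ∑ j, g j • (fun i => V i j) = 0 ∧ ∃ j, g j ≠ 0 := by
    refine Fintype.not_linearIndependent_iff.mp fun hli => ?_
    have := hli.fintype_card_le_finrank
    rw [Module.finrank_fintype_fun_eq_card] at this
    omega
  have hgV (i : ι) : ∑ j, g j * V i j = 0 := by simpa using congrFun hg i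
  refine hj (Fintype.linearIndependent_iff.mp hu g ?_ j)
  calc ∑ j, g j • (∑ i, c i • W i) j = ∑ j, ∑ i, c i * (algebraMap K L (g j) * W i j) := by
        simp only [Finset.sum_apply, Pi.smul_apply, smul_eq_mul]
        simp only [Algebra.smul_def, Finset.mul_sum]
        exact Finset.sum_congr rfl fun j _ => Finset.sum_congr rfl fun i _ => by ring
    _ = ∑ i, c i * algebraMap K L (∑ j, g j * V i j) := by
        simp only [map_sum, map_mul, hV, Finset.mul_sum]
        exact Finset.sum_comm
    _ = 0 := by simp [hgV]

/-- `v ↦ v g⁻¹` followed by a sign change of the coordinates `0, 1, 3`: it maps `Λ(g)` into `ℤ⁴`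
and `(0,0,1,0)` to the third row of `g`. -/
noncomputable def shearG : EuclideanSpace ℝ (Fin 4) →ₗ[ℝ] Fin 4 → ℝ where
  toFun v := ![√3 * v 2 - v 0, √5 * v 2 - v 1, v 2, √2 * v 2 - v 3]
  map_add' v w := by ext j; fin_cases j <;> simp <;> ring
  map_smul' c v := by ext j; fin_cases j <;> simp <;> ring

lemma shearG_apply_mem_range {v : EuclideanSpace ℝ (Fin 4)} (hv : v ∈ LatticeG) (j : Fin 4) :
    shearG v j ∈ (algebraMap ℚ ℝ).range := by
  induction hv using Submodule.span_induction with
  | mem x hx =>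
    rcases hx with rfl | rfl | rfl | rfl | rfl <;> fin_cases j <;> simp [shearG, one_mem]
  | zero => simp [zero_mem]
  | add x y _ _ hx hy => simpa using add_mem hx hy
  | smul n x _ hx => simpa using zsmul_mem hx n

lemma shearG_toLp_e3 : shearG (WithLp.toLp 2 ![0, 0, 1, 0]) = ![√3, √5, 1, √2] := by
  ext j; fin_cases j <;> simp [shearG]

lemma linearIndependent_sqrt_three_sqrt_five_one_sqrt_two :
    LinearIndependent ℚ ![√3, √5, 1, √2] := by
  refine Fintype.linearIndependent_iff.mpr fun g hg => ?_
  simp only [Fin.sum_univ_four, Matrix.cons_val, Rat.smul_def, mul_one] at hg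
  obtain ⟨h2, h3, h0, h1⟩ :=
    eq_zero_of_add_mul_sqrt_two_add_mul_sqrt_three_add_mul_sqrt_five (a := g 2) (b := g 3)
      (c := g 0) (d := g 1) (by linear_combination hg)
  intro j; fin_cases j <;> assumption

theorem toLp_e3_notMem_span_LatticeG {v₁ v₂ v₃ : EuclideanSpace ℝ (Fin 4)} (h₁ : v₁ ∈ LatticeG)
    (h₂ : v₂ ∈ LatticeG) (h₃ : v₃ ∈ LatticeG) :
    (WithLp.toLp 2 ![0, 0, 1, 0] : EuclideanSpace ℝ (Fin 4)) ∉
      Submodule.span ℝ ({v₁, v₂, v₃} : Set (EuclideanSpace ℝ (Fin 4))) := by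
  intro hmem
  have hv : ∀ i, ![v₁, v₂, v₃] i ∈ LatticeG := by
    intro i; fin_cases i <;> assumption
  have hrange : ({v₁, v₂, v₃} : Set (EuclideanSpace ℝ (Fin 4))) = Set.range ![v₁, v₂, v₃] := by
    rw [Matrix.range_cons, Matrix.range_cons_cons_empty, Set.singleton_union]
  have := Submodule.apply_mem_span_image_of_mem_span shearG hmem
  rw [hrange, ← Set.range_comp, shearG_toLp_e3] at this
  exact linearIndependent_sqrt_three_sqrt_five_one_sqrt_two.notMem_span_range_of_card_lt
    (fun i j => shearG_apply_mem_range (hv i) j) (by simp) this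

lemma geodFlow4_toLp_e1 (t : ℝ) :
    geodFlow4 t (WithLp.toLp 2 ![1, 0, 0, 0]) = WithLp.toLp 2 ![exp (-t), 0, 0, 0] := by
  ext j; fin_cases j <;> simp [geodFlow4]

lemma norm_toLp_vecCons_zero_zero_zero (x : ℝ) :
    ‖(WithLp.toLp 2 ![x, 0, 0, 0] : EuclideanSpace ℝ (Fin 4))‖ = |x| := by
  simp [EuclideanSpace.norm_eq, Fin.sum_univ_four, Real.sqrt_sq_eq_abs]

lemma toLp_e1_mem_LatticeG : (WithLp.toLp 2 ![1, 0, 0, 0] : EuclideanSpace ℝ (Fin 4)) ∈ LatticeG :=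
  Submodule.subset_span (Set.mem_insert _ _)

lemma toLp_e3_mem_span_LatticeG :
    (WithLp.toLp 2 ![0, 0, 1, 0] : EuclideanSpace ℝ (Fin 4)) ∈
      Submodule.span ℝ (LatticeG : Set (EuclideanSpace ℝ (Fin 4))) := by
  have he3 : (WithLp.toLp 2 ![0, 0, 1, 0] : EuclideanSpace ℝ (Fin 4)) =
      WithLp.toLp 2 ![√3, √5, 1, √2] - (√3 • WithLp.toLp 2 ![1, 0, 0, 0] +
        √5 • WithLp.toLp 2 ![0, 1, 0, 0] + √2 • WithLp.toLp 2 ![0, 0, 0, 1]) := by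
    ext j; fin_cases j <;> simp
  rw [LatticeG, Submodule.span_span_of_tower, he3]
  refine sub_mem (Submodule.subset_span (by simp)) (add_mem (add_mem ?_ ?_) ?_) <;>
    exact Submodule.smul_mem _ _ (Submodule.subset_span (by simp))

theorem stmt6 :
    -- (1) for every `t`, the flowed lattice contains the nonzero vector
    -- `(e^{-t}, 0, 0, 0)`, of norm `e^{-t}` …
    (∀ t : ℝ, ∃ w ∈ LatticeG, w ≠ 0 ∧
        geodFlow4 t w = WithLp.toLp 2 ![Real.exp (-t), 0, 0, 0] ∧
        ‖geodFlow4 t w‖ = Real.exp (-t)) ∧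
    -- … so the minimal norm of a nonzero vector of `Λ(g)·a_t` tends to `0`
    (∀ ε > 0, ∃ T : ℝ, ∀ t ≥ T, ∃ w ∈ LatticeG, w ≠ 0 ∧ ‖geodFlow4 t w‖ < ε) ∧
    -- (2) `(0,0,1,0)` lies in the real span of `Λ(g)` …
    ((WithLp.toLp 2 ![0, 0, 1, 0] : EuclideanSpace ℝ (Fin 4)) ∈
        Submodule.span ℝ (LatticeG : Set (EuclideanSpace ℝ (Fin 4)))) ∧
    -- … and is not contained in the real span of any sublattice of rank ≤ 3
    (∀ v₁ v₂ v₃ : EuclideanSpace ℝ (Fin 4), v₁ ∈ LatticeG → v₂ ∈ LatticeG →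
      v₃ ∈ LatticeG →
        (WithLp.toLp 2 ![0, 0, 1, 0] : EuclideanSpace ℝ (Fin 4)) ∉
          Submodule.span ℝ ({v₁, v₂, v₃} : Set (EuclideanSpace ℝ (Fin 4)))) := by
  have he1_ne : (WithLp.toLp 2 ![1, 0, 0, 0] : EuclideanSpace ℝ (Fin 4)) ≠ 0 := by
    intro h; simpa using congrArg (· 0) h
  have hnorm (t : ℝ) : ‖geodFlow4 t (WithLp.toLp 2 ![1, 0, 0, 0])‖ = exp (-t) := by
    rw [geodFlow4_toLp_e1, norm_toLp_vecCons_zero_zero_zero, abs_of_pos (exp_pos _)]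
  refine ⟨fun t => ⟨_, toLp_e1_mem_LatticeG, he1_ne, geodFlow4_toLp_e1 t, hnorm t⟩,
    fun ε hε => ?_, toLp_e3_mem_span_LatticeG, fun _ _ _ => toLp_e3_notMem_span_LatticeG⟩
  obtain ⟨T, hT⟩ :=
    Filter.eventually_atTop.mp (tendsto_exp_neg_atTop_nhds_zero.eventually (gt_mem_nhds hε))
  exact ⟨T, fun t ht => ⟨_, toLp_e1_mem_LatticeG, he1_ne, (hnorm t).trans_lt (hT t ht)⟩⟩
end
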